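/- For the scalar system x⁺ = x/2 + u·sin(πx) with x ∈ ℝ, u ∈ ℝ: the set S₁ of states from which the 1-step attainable set {x/2 + u sin(πx) : u ∈ ℝ} has empty interior equals ℤ, and inductively S_k, the set of states from which the system is not accessible in up to k steps, equals 2^{k-1}ℤ; hence the descending chain S₁ ⊋ S₂ ⊋ ⋯ never stabilizes. -/
import Mathlib


/-- The `k`-step trajectory of a scalar system with scalar input. -/
def iter1 (Φ : ℝ → ℝ → ℝ) (x : ℝ) (u : ℕ → ℝ) : ℕ → ℝ
  | 0 => x
  | k + 1 => Φ (iter1 Φ x u k) (u k)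

noncomputable def Phi12 : ℝ → ℝ → ℝ := fun x u => x / 2 + u * Real.sin (Real.pi * x)

lemma sin_int12 (z : ℤ) : Real.sin (Real.pi * z) = 0 := by
  rw [mul_comm]; exact Real.sin_int_mul_pi z

lemma sin_ne12 (x : ℝ) (h : ¬ ∃ z : ℤ, x = z) : Real.sin (Real.pi * x) ≠ 0 := by
  intro hs
  rw [Real.sin_eq_zero_iff] at hs
  obtain ⟨n, hn⟩ := hs
  refine h ⟨n, ?_⟩
  have := mul_left_cancel₀ Real.pi_ne_zero (show Real.pi * (n : ℝ) = Real.pi * x by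
    linarith [hn])
  exact this.symm

lemma detA12 (m : ℕ) (z : ℤ) (u : ℕ → ℝ) :
    ∀ j, j ≤ m + 1 → iter1 Phi12 ((2:ℝ)^m * z) u j = (2:ℝ)^m * z / 2^j := by
  intro j
  induction j with
  | zero => intro _; simp [iter1]
  | succ j ih =>
    intro hj
    have hj' : j ≤ m := by omega
    rw [iter1, ih (by omega)]
    have hz : (2:ℝ)^m * z / 2^j = ((2^(m-j) * z : ℤ) : ℝ) := by
      have h2 : (2:ℝ)^m = 2^(m-j) * 2^j := by rw [← pow_add]; congr 1; omega
      have h2j : (2:ℝ)^j ≠ 0 := by positivity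
      push_cast
      rw [h2]
      field_simp
    show (2:ℝ)^m * z / 2^j / 2 + u j * Real.sin (Real.pi * ((2:ℝ)^m * z / 2^j)) = _
    rw [hz, sin_int12, mul_zero, add_zero, ← hz, pow_succ]
    ring

lemma univ_step12 (x c : ℝ) (j : ℕ) (hdet : ∀ u : ℕ → ℝ, iter1 Phi12 x u j = c)
    (hc : ¬ ∃ z : ℤ, c = z) (y : ℝ) :
    ∃ u, iter1 Phi12 x u (j + 1) = y := by
  have hs := sin_ne12 c hc
  refine ⟨fun _ => (y - c / 2) / Real.sin (Real.pi * c), ?_⟩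
  rw [iter1, hdet]
  show c / 2 + (y - c / 2) / Real.sin (Real.pi * c) * Real.sin (Real.pi * c) = y
  rw [div_mul_cancel₀ _ hs]
  ring

lemma accH12 : ∀ m (x : ℝ), (¬ ∃ z : ℤ, x = 2^m * z) →
    ∃ j, 1 ≤ j ∧ j ≤ m + 1 ∧ ∀ y, ∃ u, iter1 Phi12 x u j = y := by
  intro m
  induction m with
  | zero =>
    intro x hx
    refine ⟨1, le_refl 1, le_refl 1, fun y => univ_step12 x x 0 (fun _ => rfl) ?_ y⟩
    simpa using hx
  | succ m ih =>
    intro x hx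
    by_cases h : ∃ z : ℤ, x = 2^m * z
    · obtain ⟨z, hz⟩ := h
      have hodd : ¬ ∃ w : ℤ, z = 2 * w := by
        rintro ⟨w, hw⟩
        exact hx ⟨w, by rw [hz, hw]; push_cast; ring⟩
      have hdet : ∀ u : ℕ → ℝ, iter1 Phi12 x u (m + 1) = (z : ℝ) / 2 := by
        intro u
        rw [hz, detA12 m z u (m + 1) le_rfl, pow_succ]
        have h2 : (2:ℝ)^m ≠ 0 := by positivity
        field_simp
      have hc : ¬ ∃ w : ℤ, (z : ℝ) / 2 = w := by
        rintro ⟨w, hw⟩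
        refine hodd ⟨w, ?_⟩
        have : (z : ℝ) = 2 * w := by linarith [hw]
        exact_mod_cast this
      exact ⟨m + 2, by omega, le_rfl, fun y => univ_step12 x _ (m + 1) hdet hc y⟩
    · obtain ⟨j, hj1, hj2, hs⟩ := ih x h
      exact ⟨j, hj1, by omega, hs⟩

/-- For `x⁺ = x/2 + u·sin(πx)` on `ℝ`: the set `S_k` of states from which the system
is not accessible in up to `k` steps equals `2^{k-1}·ℤ` (so `S₁ = ℤ`), and the chain
`S₁ ⊋ S₂ ⊋ ⋯` is strictly decreasing, hence never stabilizes. -/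
theorem stmt12 :
    let Φ : ℝ → ℝ → ℝ := fun x u => x / 2 + u * Real.sin (Real.pi * x)
    let reach : ℕ → ℝ → Set ℝ := fun k x => {y | ∃ u : ℕ → ℝ, iter1 Φ x u k = y}
    let S : ℕ → Set ℝ := fun k =>
      {x | ∀ j, 1 ≤ j → j ≤ k → interior (reach j x) = ∅}
    (S 1 = {x : ℝ | ∃ z : ℤ, x = (z : ℝ)}) ∧
    (∀ k, 1 ≤ k → S k = {x : ℝ | ∃ z : ℤ, x = 2 ^ (k - 1) * (z : ℝ)}) ∧
    (∀ k, 1 ≤ k → S (k + 1) ⊂ S k) := by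
  intro Φ reach S
  have hΦ : Φ = Phi12 := rfl
  have main : ∀ k, 1 ≤ k → S k = {x : ℝ | ∃ z : ℤ, x = 2 ^ (k - 1) * (z : ℝ)} := by
    intro k hk
    obtain ⟨m, rfl⟩ : ∃ m, k = m + 1 := ⟨k - 1, by omega⟩
    have hm : m + 1 - 1 = m := rfl
    ext x
    simp only [S, reach, hm, Set.mem_setOf_eq]
    constructor
    · intro hS
      by_contra hx
      obtain ⟨j, hj1, hj2, hsurj⟩ := accH12 m x (by simpa using hx)
      have hr : {y : ℝ | ∃ u : ℕ → ℝ, iter1 Φ x u j = y} = Set.univ := by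
        ext y
        simp only [Set.mem_setOf_eq, Set.mem_univ, iff_true, hΦ]
        exact hsurj y
      have h2 := hS j hj1 hj2
      rw [hr] at h2
      simp at h2
    · rintro ⟨z, hz⟩ j hj1 hj2
      have hzx : x = (2:ℝ)^m * z := by exact_mod_cast hz
      subst hzx
      have hr : {y : ℝ | ∃ u : ℕ → ℝ, iter1 Φ ((2:ℝ)^m * z) u j = y}
          = {(2:ℝ)^m * z / 2^j} := by
        ext y
        simp only [Set.mem_setOf_eq, Set.mem_singleton_iff, hΦ]
        constructor
        · rintro ⟨u, rfl⟩
          exact detA12 m z u j (by omega)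
        · intro h
          exact ⟨fun _ => 0, by rw [detA12 m z _ j (by omega), h]⟩
      rw [hr, interior_singleton]
  refine ⟨?_, main, ?_⟩
  · rw [main 1 le_rfl]
    norm_num
  · intro k hk
    obtain ⟨m, rfl⟩ : ∃ m, k = m + 1 := ⟨k - 1, by omega⟩
    rw [main (m + 1) (by omega), main (m + 1 + 1) (by omega)]
    have hm : m + 1 - 1 = m := rfl
    have hm2 : m + 1 + 1 - 1 = m + 1 := rfl
    rw [hm, hm2]
    constructor
    · rintro x ⟨z, hz⟩
      refine ⟨2 * z, ?_⟩
      rw [hz, pow_succ]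
      push_cast
      ring
    · intro hsub
      have hmem : ((2:ℝ)^m : ℝ) ∈ {x : ℝ | ∃ z : ℤ, x = 2 ^ m * (z : ℝ)} := ⟨1, by simp⟩
      obtain ⟨w, hw⟩ := hsub hmem
      have h2 : (2:ℝ)^m ≠ 0 := by positivity
      have h1 : (1 : ℝ) = 2 * w := by
        rw [pow_succ] at hw
        have := mul_left_cancel₀ h2 (show (2:ℝ)^m * 1 = (2:ℝ)^m * (2 * w) by
          rw [mul_one]; conv_lhs => rw [hw]
          ring)
        linarith
      have : (1 : ℤ) = 2 * w := by exact_mod_cast h1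
      omega
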